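/- arXiv:1504.03923 — 4 statements merged into one kernel-verified Lean document; each statement's English description precedes it below -/
import Mathlib

section
/- Let A ∈ F_2^{m×m} be a symmetric matrix of rank k over F_2. Then there exist an integer l ≤ 3k/2 and vectors v_1,…,v_l ∈ F_2^m, each lying in the column space of A, such that A = Σ_{i=1}^l v_i ⊗ v_i. -/
open scoped BigOperators
open scoped Matrix

private lemma two_eq_zero' (a : ZMod 2) : a + a = 0 := by
  revert a; decide

private lemma vecMulVec_mulVec' {m : ℕ} (u w x : Fin m → ZMod 2) :
    (Matrix.vecMulVec u w).mulVec x = (w ⬝ᵥ x) • u := by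
  funext k
  show ∑ j, (u k * w j) * x j = (∑ j, w j * x j) * u k
  rw [Finset.sum_mul]
  exact Finset.sum_congr rfl fun j _ => by ring

/-- symmetry: the `i`-coordinate of `A x` is the dot product of the `i`-th column with `x`. -/
private lemma coord_eq_col_dot {m : ℕ} {A : Matrix (Fin m) (Fin m) (ZMod 2)}
    (h : A.IsSymm) (i : Fin m) (x : Fin m → ZMod 2) :
    A.mulVec x i = (A.mulVec ((Pi.single i 1 : Fin m → ZMod 2))) ⬝ᵥ x := by
  show ∑ j, A i j * x j = ∑ j, (A.mulVec ((Pi.single i 1 : Fin m → ZMod 2))) j * x j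
  refine Finset.sum_congr rfl fun j _ => ?_
  have : A.mulVec ((Pi.single i 1 : Fin m → ZMod 2)) j = A j i := by
    simp [Matrix.mulVec_single]
  rw [this, h.apply j i]

private lemma col_apply {m : ℕ} (A : Matrix (Fin m) (Fin m) (ZMod 2)) (i k : Fin m) :
    A.mulVec ((Pi.single i 1 : Fin m → ZMod 2)) k = A k i := by
  simp [Matrix.mulVec_single]

private lemma main_decomp : ∀ (n : ℕ) {m : ℕ} (A : Matrix (Fin m) (Fin m) (ZMod 2)),
    A.IsSymm → A.rank = n →
    ∃ l : ℕ, 2 * l ≤ 3 * n ∧ ∃ v : Fin l → (Fin m → ZMod 2),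
      (∀ i, v i ∈ LinearMap.range A.mulVecLin) ∧
      A = ∑ i, Matrix.vecMulVec (v i) (v i) := by
  intro n
  induction n using Nat.strong_induction_on with
  | _ n ih =>
  intro m A hsymm hrank
  by_cases hA : A = 0
  · exact ⟨0, by omega, Fin.elim0, fun i => i.elim0, by simp [hA]⟩
  by_cases hdiag : ∃ i, A i i = 1
  · -- Case 1: a nonzero diagonal entry
    obtain ⟨i, hii⟩ := hdiag
    set v := A.mulVec ((Pi.single i 1 : Fin m → ZMod 2)) with hv
    set A' := A + Matrix.vecMulVec v v with hA'
    have hvi : v i = 1 := by rw [hv, col_apply]; exact hii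
    have hsymm' : A'.IsSymm := by
      refine Matrix.IsSymm.ext fun a b => ?_
      show A b a + v b * v a = A a b + v a * v b
      rw [hsymm.apply a b, mul_comm]
    have hmv : ∀ x, A'.mulVec x = A.mulVec (x + (v ⬝ᵥ x) • (Pi.single i 1 : Fin m → ZMod 2)) := by
      intro x
      rw [hA', Matrix.add_mulVec, vecMulVec_mulVec', Matrix.mulVec_add, Matrix.mulVec_smul, ← hv]
    have hle : LinearMap.range A'.mulVecLin ≤ LinearMap.range A.mulVecLin := by
      rintro y ⟨x, rfl⟩
      exact ⟨x + (v ⬝ᵥ x) • Pi.single i 1, (hmv x).symm⟩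
    have hcoord : ∀ x, A'.mulVec x i = 0 := by
      intro x
      have h1 : A.mulVec x i = v ⬝ᵥ x := coord_eq_col_dot hsymm i x
      rw [hA', Matrix.add_mulVec, vecMulVec_mulVec']
      show A.mulVec x i + (v ⬝ᵥ x) * v i = 0
      rw [h1, hvi, mul_one]
      exact two_eq_zero' _
    have hvmem : v ∈ LinearMap.range A.mulVecLin := ⟨Pi.single i 1, rfl⟩
    have hvnot : v ∉ LinearMap.range A'.mulVecLin := by
      rintro ⟨x, hx⟩
      have h0 := hcoord x
      rw [show A'.mulVec x = v from hx] at h0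
      rw [hvi] at h0
      exact one_ne_zero h0
    have hlt : LinearMap.range A'.mulVecLin < LinearMap.range A.mulVecLin :=
      lt_of_le_of_ne hle (fun h => hvnot (h.symm ▸ hvmem))
    have hranklt : A'.rank < n := by
      rw [← hrank]
      exact Submodule.finrank_lt_finrank_of_lt hlt
    obtain ⟨l', hl', v', hv'mem, hsum⟩ := ih A'.rank hranklt A' hsymm' rfl
    refine ⟨l' + 1, by omega, Fin.cons v v', ?_, ?_⟩
    · intro idx
      refine Fin.cases ?_ ?_ idx
      · exact hvmem
      · intro k; exact hle (hv'mem k)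
    · rw [Fin.sum_univ_succ]
      simp only [Fin.cons_zero, Fin.cons_succ]
      rw [← hsum, hA']
      ext a b
      show A a b = v a * v b + (A a b + v a * v b)
      generalize A a b = x
      generalize v a = p
      generalize v b = q
      revert x p q; decide
  · -- Case 2: all diagonal entries are zero
    have hdiag0 : ∀ i, A i i = 0 := by
      intro i
      have h := fun h' => hdiag ⟨i, h'⟩
      revert h; generalize A i i = x; revert x; decide
    have hex : ∃ i j, A i j = 1 := by
      by_contra h
      push_neg at h
      apply hA
      ext a b
      have := h a b
      revert this; show A a b ≠ 1 → A a b = 0; generalize A a b = x; revert x; decide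
    obtain ⟨i, j, hij⟩ := hex
    set u := A.mulVec ((Pi.single i 1 : Fin m → ZMod 2)) with hu
    set w := A.mulVec ((Pi.single j 1 : Fin m → ZMod 2)) with hw
    have hui : u i = 0 := by rw [hu, col_apply]; exact hdiag0 i
    have huj : u j = 1 := by rw [hu, col_apply]; rw [hsymm.apply j i] at *; exact hij
    have hwi : w i = 1 := by rw [hw, col_apply]; exact hij
    have hwj : w j = 0 := by rw [hw, col_apply]; exact hdiag0 j
    set A' := A + (Matrix.vecMulVec u w + Matrix.vecMulVec w u) with hA'
    have hsymm' : A'.IsSymm := by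
      refine Matrix.IsSymm.ext fun a b => ?_
      show A b a + (u b * w a + w b * u a) = A a b + (u a * w b + w a * u b)
      rw [hsymm.apply a b]; ring
    have hmv : ∀ x, A'.mulVec x
        = A.mulVec (x + ((w ⬝ᵥ x) • (Pi.single i 1 : Fin m → ZMod 2) + (u ⬝ᵥ x) • (Pi.single j 1 : Fin m → ZMod 2))) := by
      intro x
      rw [hA', Matrix.add_mulVec, Matrix.add_mulVec, vecMulVec_mulVec', vecMulVec_mulVec',
        Matrix.mulVec_add, Matrix.mulVec_add, Matrix.mulVec_smul, Matrix.mulVec_smul, ← hu, ← hw]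
    have hle : LinearMap.range A'.mulVecLin ≤ LinearMap.range A.mulVecLin := by
      rintro y ⟨x, rfl⟩
      exact ⟨x + ((w ⬝ᵥ x) • (Pi.single i 1 : Fin m → ZMod 2) + (u ⬝ᵥ x) • (Pi.single j 1 : Fin m → ZMod 2)), (hmv x).symm⟩
    have hcoordi : ∀ x, A'.mulVec x i = 0 := by
      intro x
      have h1 : A.mulVec x i = u ⬝ᵥ x := coord_eq_col_dot hsymm i x
      rw [hA', Matrix.add_mulVec, Matrix.add_mulVec, vecMulVec_mulVec', vecMulVec_mulVec']
      show A.mulVec x i + ((w ⬝ᵥ x) * u i + (u ⬝ᵥ x) * w i) = 0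
      rw [h1, hui, hwi, mul_zero, mul_one, zero_add]
      exact two_eq_zero' _
    have hcoordj : ∀ x, A'.mulVec x j = 0 := by
      intro x
      have h1 : A.mulVec x j = w ⬝ᵥ x := coord_eq_col_dot hsymm j x
      rw [hA', Matrix.add_mulVec, Matrix.add_mulVec, vecMulVec_mulVec', vecMulVec_mulVec']
      show A.mulVec x j + ((w ⬝ᵥ x) * u j + (u ⬝ᵥ x) * w j) = 0
      rw [h1, huj, hwj, mul_zero, mul_one, add_zero]
      exact two_eq_zero' _
    have humem : u ∈ LinearMap.range A.mulVecLin := ⟨Pi.single i 1, rfl⟩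
    have hwmem : w ∈ LinearMap.range A.mulVecLin := ⟨Pi.single j 1, rfl⟩
    set S := LinearMap.range A'.mulVecLin with hS
    set T := S ⊔ Submodule.span (ZMod 2) {w} with hT
    have hwT : w ∈ T := Submodule.mem_sup_right (Submodule.mem_span_singleton_self w)
    have hwnotS : w ∉ S := by
      rintro ⟨x, hx⟩
      have h0 := hcoordi x
      rw [show A'.mulVec x = w from hx, hwi] at h0
      exact one_ne_zero h0
    have hTj : ∀ y ∈ T, y j = 0 := by
      intro y hy
      obtain ⟨s, hs, t, ht, rfl⟩ := Submodule.mem_sup.mp hy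
      obtain ⟨c, rfl⟩ := Submodule.mem_span_singleton.mp ht
      obtain ⟨x, rfl⟩ := hs
      show A'.mulVec x j + c * w j = 0
      rw [hcoordj x, hwj, mul_zero, add_zero]
    have hunotT : u ∉ T := fun h => one_ne_zero (huj ▸ hTj u h)
    have h1 : S < T := lt_of_le_of_ne le_sup_left (fun h => hwnotS (h ▸ hwT))
    have h2 : T < T ⊔ Submodule.span (ZMod 2) {u} :=
      lt_of_le_of_ne le_sup_left (fun h => hunotT
        (h ▸ Submodule.mem_sup_right (Submodule.mem_span_singleton_self u)))
    have h3 : T ⊔ Submodule.span (ZMod 2) {u} ≤ LinearMap.range A.mulVecLin := by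
      refine sup_le (sup_le hle ?_) ?_
      · rw [Submodule.span_le, Set.singleton_subset_iff]; exact hwmem
      · rw [Submodule.span_le, Set.singleton_subset_iff]; exact humem
    have hrank2 : A'.rank + 2 ≤ n := by
      have a1 := Submodule.finrank_lt_finrank_of_lt h1
      have a2 := Submodule.finrank_lt_finrank_of_lt h2
      have a3 := Submodule.finrank_mono h3
      rw [← hrank]
      unfold Matrix.rank
      rw [← hS]
      omega
    have hranklt : A'.rank < n := by omega
    obtain ⟨l', hl', v', hv'mem, hsum⟩ := ih A'.rank hranklt A' hsymm' rfl
    refine ⟨l' + 3, by omega, Fin.cons u (Fin.cons w (Fin.cons (u + w) v')), ?_, ?_⟩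
    · intro idx
      refine Fin.cases ?_ ?_ idx
      · exact humem
      · intro k
        refine Fin.cases ?_ ?_ k
        · exact hwmem
        · intro k'
          refine Fin.cases ?_ ?_ k'
          · exact Submodule.add_mem _ humem hwmem
          · intro k''; exact hle (hv'mem k'')
    · rw [Fin.sum_univ_succ, Fin.sum_univ_succ, Fin.sum_univ_succ]
      simp only [Fin.cons_zero, Fin.cons_succ]
      rw [← hsum, hA']
      ext a b
      show A a b = u a * u b + (w a * w b + ((u a + w a) * (u b + w b)
        + (A a b + (u a * w b + w a * u b))))
      generalize A a b = x
      generalize u a = p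
      generalize u b = q
      generalize w a = r
      generalize w b = s
      revert x p q r s; decide

/-- a symmetric matrix of rank `k` over `F₂` is a sum of `l ≤ 3k/2` outer
squares `vᵢ ⊗ vᵢ` with each `vᵢ` in the column space of `A`. -/
theorem symm_matrix_decomposition (m k : ℕ) (A : Matrix (Fin m) (Fin m) (ZMod 2))
    (hsymm : A.IsSymm) (hrank : A.rank = k) :
    ∃ l : ℕ, 2 * l ≤ 3 * k ∧ ∃ v : Fin l → (Fin m → ZMod 2),
      (∀ i, v i ∈ LinearMap.range A.mulVecLin) ∧
      A = ∑ i, Matrix.vecMulVec (v i) (v i) := by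
  exact main_decomp k A hsymm hrank
end

section
/- Let q_1(x)=0,…,q_s(x)=0 be quadratic equations over F_2 in m variables with matrix forms Q_1,…,Q_s ∈ F_2^{(m+1)×(m+1)}. Suppose A ∈ F_2^{(m+1)×(m+1)} is pseudo-quadratic with rank(A) ≤ k and ⟨Q_i, A⟩ = 0 for all i ∈ [s]. Then there exist an odd integer l < 3k/2 + 1 and vectors a^(1),…,a^(l) ∈ F_2^{m+1} such that A = Σ_{j=1}^l a^(j) ⊗ a^(j), where for all j ∈ [l] one has a^(j)_1 = 1 and D_1(a^(j)) lies in the column space of D_1(A); moreover the assignments D_1(a^(1)),…,D_1(a^(l)) ∈ F_2^m satisfy all equations q_1(x)=0,…,q_s(x)=0 in superposition. -/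
open scoped BigOperators

/-- Remove the first coordinate of a vector over `F₂`. -/
def D1vec {m : ℕ} (v : Fin (m + 1) → ZMod 2) : Fin m → ZMod 2 := fun i => v i.succ

/-- Remove the first row and column of a matrix over `F₂`. -/
def D1mat {m : ℕ} (A : Matrix (Fin (m + 1)) (Fin (m + 1)) (ZMod 2)) :
    Matrix (Fin m) (Fin m) (ZMod 2) :=
  A.submatrix Fin.succ Fin.succ

/-- A matrix `A ∈ F₂^{(m+1)×(m+1)}` is pseudo-quadratic if it is symmetric, `A₁,₁ = 1`, and
`A₁,ᵢ = Aᵢ,₁ = Aᵢ,ᵢ` for all `i = 2, …, m+1`. -/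
def PseudoQuadratic {m : ℕ} (A : Matrix (Fin (m + 1)) (Fin (m + 1)) (ZMod 2)) : Prop :=
  A.IsSymm ∧ A 0 0 = 1 ∧ ∀ i : Fin m, A 0 i.succ = A i.succ 0 ∧ A 0 i.succ = A i.succ i.succ

/-- The matrix form of the quadratic polynomial
`q(x) = c + ∑ i, c₁ i * x i + ∑_{i<j} c₂ i j * x i * x j`:
`Q₁,₁ = c`, `Q₁,ᵢ₊₁ = c₁ i`, `Qᵢ₊₁,ⱼ₊₁ = c₂ i j` for `i < j`, and all other entries `0`. -/
def Qmat {m : ℕ} (c : ZMod 2) (c1 : Fin m → ZMod 2) (c2 : Fin m → Fin m → ZMod 2) :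
    Matrix (Fin (m + 1)) (Fin (m + 1)) (ZMod 2) :=
  Matrix.of fun i j =>
    Fin.cases (Fin.cases c (fun j' => c1 j') j)
      (fun i' => Fin.cases 0 (fun j' => if i' < j' then c2 i' j' else 0) j) i

/-- Entrywise dot product of two matrices over `F₂`. -/
def mdot {m : ℕ} (Q A : Matrix (Fin (m + 1)) (Fin (m + 1)) (ZMod 2)) : ZMod 2 :=
  ∑ i, ∑ j, Q i j * A i j

/-- The assignments `a 1, …, a t` satisfy the quadratic equation `q(x) = 0` in superposition. -/
def InSuperposition {m t : ℕ} (c : ZMod 2) (c1 : Fin m → ZMod 2) (c2 : Fin m → Fin m → ZMod 2)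
    (a : Fin t → Fin m → ZMod 2) : Prop :=
  c + (∑ i, c1 i * (∑ l, a l i)) +
    (∑ i, ∑ j, if i < j then c2 i j * (∑ l, a l i * a l j) else 0) = 0


open Matrix

namespace PQAux

variable {n : ℕ}

lemma zadd (x : ZMod 2) : x + x = 0 := by revert x; decide

lemma zsq (x : ZMod 2) : x * x = x := by revert x; decide

lemma zone {x : ZMod 2} (h : x ≠ 0) : x = 1 := by revert x; decide

lemma madd (M : Matrix (Fin n) (Fin n) (ZMod 2)) : M + M = 0 := by
  ext i j; simp [zadd]

lemma col_mem (M : Matrix (Fin n) (Fin n) (ZMod 2)) (i : Fin n) :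
    (fun k => M k i) ∈ LinearMap.range M.mulVecLin := by
  refine ⟨Pi.single i 1, ?_⟩
  funext k
  simp [Matrix.mulVecLin_apply, Matrix.mulVec_single]

lemma vmv_mulVec (u v y : Fin n → ZMod 2) :
    (vecMulVec u v).mulVec y = (v ⬝ᵥ y) • u := by
  funext k
  simp only [Matrix.mulVec, dotProduct, vecMulVec_apply, Pi.smul_apply, smul_eq_mul]
  rw [Finset.sum_mul]
  exact Finset.sum_congr rfl fun l _ => by ring

lemma mem_row_zero {M : Matrix (Fin n) (Fin n) (ZMod 2)} {i : Fin n}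
    (hrow : ∀ k, M i k = 0) {x : Fin n → ZMod 2}
    (hx : x ∈ LinearMap.range M.mulVecLin) : x i = 0 := by
  obtain ⟨y, rfl⟩ := hx
  simp [Matrix.mulVecLin_apply, Matrix.mulVec, dotProduct, hrow]

/-- key dimension-drop lemma -/
lemma drop (V W : Submodule (ZMod 2) (Fin n → ZMod 2)) (i : Fin n)
    (v : Fin n → ZMod 2) (hv : v ∈ V) (hvi : v i = 1)
    (hWV : W ≤ V) (hW : ∀ w ∈ W, w i = 0) :
    Module.finrank (ZMod 2) W + 1 ≤ Module.finrank (ZMod 2) V := by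
  classical
  let f : V →ₗ[ZMod 2] ZMod 2 := (LinearMap.proj i).comp V.subtype
  have hr : LinearMap.range f = ⊤ := by
    rw [eq_top_iff]
    rintro x -
    exact ⟨x • ⟨v, hv⟩, by simp [f, hvi]⟩
  have h1 : Module.finrank (ZMod 2) (LinearMap.range f) = 1 := by
    rw [hr]; simpa using finrank_top (ZMod 2) (ZMod 2)
  have h2 := LinearMap.finrank_range_add_finrank_ker f
  let g : W →ₗ[ZMod 2] LinearMap.ker f :=
    { toFun := fun w => ⟨⟨w.1, hWV w.2⟩, by
        simp [f, LinearMap.mem_ker, hW w.1 w.2]⟩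
      map_add' := fun a b => by ext; simp
      map_smul' := fun r a => by ext; simp }
  have hg : Function.Injective g := by
    intro a b hab
    apply Subtype.ext
    have : ((g a : V) : Fin n → ZMod 2) = ((g b : V) : Fin n → ZMod 2) := by rw [hab]
    exact this
  have h3 := LinearMap.finrank_le_finrank_of_injective hg
  omega



lemma rank_finrank (M : Matrix (Fin n) (Fin n) (ZMod 2)) :
    M.rank = Module.finrank (ZMod 2) (LinearMap.range M.mulVecLin) := rfl

lemma exists_entry_one {B : Matrix (Fin n) (Fin n) (ZMod 2)} (hB : B ≠ 0) :
    ∃ i j, B i j = 1 := by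
  by_contra h
  push_neg at h
  apply hB
  ext i j
  have := h i j
  have h2 : ∀ x : ZMod 2, x ≠ 1 → x = 0 := by decide
  simpa using h2 _ this

/-- decomposition of an alternating symmetric matrix into hyperbolic pairs -/
lemma alt_decomp : ∀ (r : ℕ) (B : Matrix (Fin n) (Fin n) (ZMod 2)),
    B.IsSymm → (∀ i, B i i = 0) → B.rank ≤ r →
    ∃ (h : ℕ) (u v : Fin h → Fin n → ZMod 2),
      2 * h ≤ r ∧
      B = ∑ p, (vecMulVec (u p) (v p) + vecMulVec (v p) (u p)) ∧
      (∀ p, u p ∈ LinearMap.range B.mulVecLin) ∧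
      (∀ p, v p ∈ LinearMap.range B.mulVecLin) := by
  intro r
  induction r using Nat.strong_induction_on with
  | _ r IH =>
  intro B hsym hdiag hrank
  by_cases hB0 : B = 0
  · exact ⟨0, finZeroElim, finZeroElim, Nat.zero_le r, by simp [hB0],
      fun p => p.elim0, fun p => p.elim0⟩
  obtain ⟨i, j, hij⟩ := exists_entry_one hB0
  set u : Fin n → ZMod 2 := fun k => B k i with hu
  set v : Fin n → ZMod 2 := fun k => B k j with hvdef
  have hui : u i = 0 := hdiag i
  have hvj : v j = 0 := hdiag j
  have hvi : v i = 1 := hij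
  have huj : u j = 1 := by simpa [hu] using (hsym.apply i j).trans hij
  set B' : Matrix (Fin n) (Fin n) (ZMod 2) :=
    B + vecMulVec u v + vecMulVec v u with hB'
  have hB'app : ∀ a b, B' a b = B a b + u a * v b + v a * u b := by
    intro a b; simp [hB', Matrix.add_apply, vecMulVec_apply]
  have hB'sym : B'.IsSymm := by
    apply Matrix.IsSymm.ext
    intro a b
    rw [hB'app, hB'app, hsym.apply a b]
    ring
  have hB'diag : ∀ k, B' k k = 0 := by
    intro k
    rw [hB'app, hdiag, zero_add, mul_comm]
    exact zadd _
  have hfin1 : ∀ x y : ZMod 2, x + 0 * y + 1 * x = 0 := by decide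
  have hfin2 : ∀ x y : ZMod 2, x + 1 * x + 0 * y = 0 := by decide
  have hrowi : ∀ k, B' i k = 0 := by
    intro k
    rw [hB'app]
    simp only [hu, hvdef]
    rw [hdiag i, hij, hsym.apply i k]
    exact hfin1 _ _
  have hrowj : ∀ k, B' j k = 0 := by
    intro k
    rw [hB'app]
    simp only [hu, hvdef]
    rw [hdiag j, hsym.apply i j, hij, hsym.apply j k]
    exact hfin2 _ _
  have hBeq : B = B' + (vecMulVec u v + vecMulVec v u) := by
    have h1 : B' + (vecMulVec u v + vecMulVec v u) =
        B + ((vecMulVec u v + vecMulVec v u) + (vecMulVec u v + vecMulVec v u)) := by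
      rw [hB']; abel
    rw [h1, madd, add_zero]
  have hle : LinearMap.range B'.mulVecLin ≤ LinearMap.range B.mulVecLin := by
    rintro x ⟨y, rfl⟩
    have hxy : B'.mulVecLin y = B.mulVec y + (v ⬝ᵥ y) • u + (u ⬝ᵥ y) • v := by
      simp [hB', Matrix.mulVecLin_apply, Matrix.add_mulVec, vmv_mulVec]
    rw [hxy]
    exact add_mem (add_mem ⟨y, rfl⟩ (Submodule.smul_mem _ _ (col_mem B i)))
      (Submodule.smul_mem _ _ (col_mem B j))
  -- rank bound
  classical
  set Ki : Submodule (ZMod 2) (Fin n → ZMod 2) :=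
    LinearMap.ker (LinearMap.proj i : (Fin n → ZMod 2) →ₗ[ZMod 2] ZMod 2) with hKi
  set Kj : Submodule (ZMod 2) (Fin n → ZMod 2) :=
    LinearMap.ker (LinearMap.proj j : (Fin n → ZMod 2) →ₗ[ZMod 2] ZMod 2) with hKj
  set V : Submodule (ZMod 2) (Fin n → ZMod 2) := LinearMap.range B.mulVecLin with hV
  have hd1 : Module.finrank (ZMod 2) (V ⊓ Ki : Submodule (ZMod 2) (Fin n → ZMod 2)) + 1 ≤
      Module.finrank (ZMod 2) V :=
    drop V (V ⊓ Ki) i v (col_mem B j) hvi inf_le_left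
      (fun w hw => hw.2)
  have hd2 : Module.finrank (ZMod 2) ((V ⊓ Ki) ⊓ Kj : Submodule (ZMod 2) (Fin n → ZMod 2)) + 1 ≤
      Module.finrank (ZMod 2) (V ⊓ Ki : Submodule (ZMod 2) (Fin n → ZMod 2)) :=
    drop (V ⊓ Ki) ((V ⊓ Ki) ⊓ Kj) j u ⟨col_mem B i, hui⟩ huj inf_le_left
      (fun w hw => hw.2)
  have hsub : LinearMap.range B'.mulVecLin ≤ (V ⊓ Ki) ⊓ Kj := by
    intro x hx
    exact ⟨⟨hle hx, mem_row_zero hrowi hx⟩, mem_row_zero hrowj hx⟩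
  have hrankB' : B'.rank + 2 ≤ r := by
    have hmono := Submodule.finrank_mono hsub
    have e1 : B.rank = Module.finrank (ZMod 2) V := rfl
    have e2 : B'.rank = Module.finrank (ZMod 2) (LinearMap.range B'.mulVecLin) := rfl
    omega
  obtain ⟨h', u', v', hcount, hdecomp, hu'mem, hv'mem⟩ :=
    IH (r - 2) (by omega) B' hB'sym hB'diag (by omega)
  refine ⟨h' + 1, Fin.cons u u', Fin.cons v v', by omega, ?_, ?_, ?_⟩
  · rw [Fin.sum_univ_succ]
    simp only [Fin.cons_succ, Fin.cons_zero]
    rw [← hdecomp, hBeq]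
    abel
  · intro p
    refine Fin.cases ?_ (fun q => ?_) p
    · exact col_mem B i
    · simpa using hle (hu'mem q)
  · intro p
    refine Fin.cases ?_ (fun q => ?_) p
    · exact col_mem B j
    · simpa using hle (hv'mem q)

/-- the diagonal of a symmetric matrix over `F₂` lies in its column space -/
lemma diag_mem : ∀ (r : ℕ) (B : Matrix (Fin n) (Fin n) (ZMod 2)), B.IsSymm → B.rank ≤ r →
    (fun i => B i i) ∈ LinearMap.range B.mulVecLin := by
  intro r
  induction r using Nat.strong_induction_on with
  | _ r IH =>
  intro B hsym hrank
  by_cases hd : ∀ i, B i i = 0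
  · have : (fun i => B i i) = (0 : Fin n → ZMod 2) := by funext i; exact hd i
    rw [this]
    exact zero_mem _
  push_neg at hd
  obtain ⟨i, hi⟩ := hd
  have hBii : B i i = 1 := zone hi
  set cv : Fin n → ZMod 2 := fun k => B k i with hcv
  set B' : Matrix (Fin n) (Fin n) (ZMod 2) := B + vecMulVec cv cv with hB'
  have hB'app : ∀ a b, B' a b = B a b + cv a * cv b := by
    intro a b; simp [hB', Matrix.add_apply, vecMulVec_apply]
  have hB'sym : B'.IsSymm := by
    apply Matrix.IsSymm.ext
    intro a b
    rw [hB'app, hB'app, hsym.apply a b]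
    ring
  have hfin1 : ∀ x : ZMod 2, x + 1 * x = 0 := by decide
  have hrowi : ∀ k, B' i k = 0 := by
    intro k
    rw [hB'app]
    simp only [hcv]
    rw [hsym.apply i k, hBii]
    exact hfin1 _
  have hle : LinearMap.range B'.mulVecLin ≤ LinearMap.range B.mulVecLin := by
    rintro x ⟨y, rfl⟩
    have hxy : B'.mulVecLin y = B.mulVec y + (cv ⬝ᵥ y) • cv := by
      simp [hB', Matrix.mulVecLin_apply, Matrix.add_mulVec, vmv_mulVec]
    rw [hxy]
    exact add_mem ⟨y, rfl⟩ (Submodule.smul_mem _ _ (col_mem B i))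
  classical
  set Ki : Submodule (ZMod 2) (Fin n → ZMod 2) :=
    LinearMap.ker (LinearMap.proj i : (Fin n → ZMod 2) →ₗ[ZMod 2] ZMod 2) with hKi
  set V : Submodule (ZMod 2) (Fin n → ZMod 2) := LinearMap.range B.mulVecLin with hV
  have hd1 : Module.finrank (ZMod 2) (V ⊓ Ki : Submodule (ZMod 2) (Fin n → ZMod 2)) + 1 ≤
      Module.finrank (ZMod 2) V :=
    drop V (V ⊓ Ki) i cv (col_mem B i) hBii inf_le_left (fun w hw => hw.2)
  have hsub : LinearMap.range B'.mulVecLin ≤ V ⊓ Ki := by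
    intro x hx
    exact ⟨hle hx, mem_row_zero hrowi hx⟩
  have hrankB' : B'.rank + 1 ≤ r := by
    have hmono := Submodule.finrank_mono hsub
    have e1 : B.rank = Module.finrank (ZMod 2) V := rfl
    have e2 : B'.rank = Module.finrank (ZMod 2) (LinearMap.range B'.mulVecLin) := rfl
    omega
  have hIH := IH (r - 1) (by omega) B' hB'sym (by omega)
  have hdiagEq : (fun k : Fin n => B k k) = (fun k : Fin n => B' k k) + cv := by
    funext k
    have : cv k * cv k = cv k := zsq _
    rw [Pi.add_apply, hB'app, this]
    rw [add_assoc, zadd, add_zero]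
  rw [hdiagEq]
  exact add_mem (hle hIH) (col_mem B i)

end PQAux

namespace PQAux

variable {m : ℕ} (c : ZMod 2) (c1 : Fin m → ZMod 2) (c2 : Fin m → Fin m → ZMod 2)

theorem mdot_vmv (w : Fin (m+1) → ZMod 2) (h0 : w 0 = 1) :
    mdot (Qmat c c1 c2) (Matrix.vecMulVec w w)
      = c + (∑ i, c1 i * w i.succ) +
        ∑ i, ∑ j, (if i < j then c2 i j * (w i.succ * w j.succ) else 0) := by
  unfold mdot
  rw [Fin.sum_univ_succ]
  rw [Fin.sum_univ_succ]
  simp only [Matrix.vecMulVec_apply, h0]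
  congr 1
  · congr 1
    · show c * (1 * 1) = c
      ring
    · exact Finset.sum_congr rfl fun j _ => by
        show c1 j * (1 * w j.succ) = c1 j * w j.succ
        ring
  · refine Finset.sum_congr rfl fun i _ => ?_
    rw [Fin.sum_univ_succ]
    show (0 : ZMod 2) * (w i.succ * w 0) + _ = _
    rw [zero_mul, zero_add]
    refine Finset.sum_congr rfl fun j _ => ?_
    show (if i < j then c2 i j else 0) * (w i.succ * w j.succ) = _
    split <;> ring

theorem mdot_sum {l : ℕ} (M : Fin l → Matrix (Fin (m+1)) (Fin (m+1)) (ZMod 2)) :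
    mdot (Qmat c c1 c2) (∑ j, M j) = ∑ j, mdot (Qmat c c1 c2) (M j) := by
  unfold mdot
  simp only [Matrix.sum_apply, Finset.mul_sum]
  exact (Finset.sum_congr rfl fun i _ => Finset.sum_comm).trans Finset.sum_comm

theorem superpos {l : ℕ} (hodd : Odd l) (w : Fin l → Fin (m+1) → ZMod 2)
    (h0 : ∀ j, w j 0 = 1)
    (hm : mdot (Qmat c c1 c2) (∑ j, Matrix.vecMulVec (w j) (w j)) = 0) :
    InSuperposition c c1 c2 (fun j => D1vec (w j)) := by
  have hcast : (l : ZMod 2) = 1 := by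
    obtain ⟨t, rfl⟩ := hodd
    push_cast
    have h2 : (2 : ZMod 2) = 0 := rfl
    rw [h2]
    ring
  rw [mdot_sum] at hm
  have hsummand : ∀ j, mdot (Qmat c c1 c2) (Matrix.vecMulVec (w j) (w j))
      = c + (∑ i, c1 i * w j i.succ) +
        ∑ i, ∑ p, (if i < p then c2 i p * (w j i.succ * w j p.succ) else 0) :=
    fun j => mdot_vmv c c1 c2 (w j) (h0 j)
  rw [Finset.sum_congr rfl (fun j _ => hsummand j)] at hm
  have e1 : (∑ _j : Fin l, c) = c := by
    rw [Finset.sum_const, Finset.card_univ, Fintype.card_fin, nsmul_eq_mul, hcast, one_mul]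
  have e2 : (∑ j : Fin l, ∑ i, c1 i * w j i.succ)
      = ∑ i, c1 i * (∑ jl : Fin l, w jl i.succ) := by
    rw [Finset.sum_comm]
    exact Finset.sum_congr rfl fun i _ => (Finset.mul_sum _ _ _).symm
  have e3 : (∑ j : Fin l, ∑ i, ∑ p, (if i < p then c2 i p * (w j i.succ * w j p.succ) else 0))
      = ∑ i, ∑ p, (if i < p then c2 i p * (∑ jl : Fin l, w jl i.succ * w jl p.succ) else 0) := by
    rw [Finset.sum_comm]
    refine Finset.sum_congr rfl fun i _ => ?_
    rw [Finset.sum_comm]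
    refine Finset.sum_congr rfl fun p _ => ?_
    split
    · exact (Finset.mul_sum _ _ _).symm
    · exact Finset.sum_const_zero
  rw [Finset.sum_add_distrib, Finset.sum_add_distrib, e1, e2, e3] at hm
  unfold InSuperposition
  simp only [D1vec]
  exact hm

theorem D1_mem {m : ℕ} (A : Matrix (Fin (m+1)) (Fin (m+1)) (ZMod 2))
    (hsym : A.IsSymm) (hdg : ∀ i : Fin m, A i.succ 0 = A i.succ i.succ)
    (w : Fin (m+1) → ZMod 2) (hw : w ∈ LinearMap.range A.mulVecLin) :
    D1vec w ∈ LinearMap.range (D1mat A).mulVecLin := by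
  obtain ⟨y, rfl⟩ := hw
  have hAsym : (D1mat A).IsSymm := hsym.submatrix _
  have key : D1vec (A.mulVecLin y)
      = (y 0) • (fun i => (D1mat A) i i) + (D1mat A).mulVec (fun j => y j.succ) := by
    funext i
    simp only [D1vec, Matrix.mulVecLin_apply, Matrix.mulVec, dotProduct, Pi.add_apply,
      Pi.smul_apply, smul_eq_mul, D1mat, Matrix.submatrix_apply]
    rw [Fin.sum_univ_succ]
    rw [hdg i]
    ring
  rw [key]
  exact add_mem (Submodule.smul_mem _ _ (diag_mem ((D1mat A).rank) (D1mat A) hAsym le_rfl))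
    ⟨_, rfl⟩

theorem sq3 : ∀ a b x x' y y' : ZMod 2,
    (a + x) * (b + x') + (a + y) * (b + y') + (a + x + y) * (b + x' + y')
      = a * b + (x * y' + y * x') := by decide

end PQAux

/-- a low-rank pseudo-quadratic matrix solution to the linearized system decodes
into an odd number of assignments satisfying all the quadratic equations in superposition. -/
theorem pseudoQuadratic_superposition_decoding (m s k : ℕ)
    (c : Fin s → ZMod 2) (c1 : Fin s → Fin m → ZMod 2) (c2 : Fin s → Fin m → Fin m → ZMod 2)
    (A : Matrix (Fin (m + 1)) (Fin (m + 1)) (ZMod 2))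
    (hpq : PseudoQuadratic A) (hrank : A.rank ≤ k)
    (hsat : ∀ i : Fin s, mdot (Qmat (c i) (c1 i) (c2 i)) A = 0) :
    ∃ l : ℕ, Odd l ∧ 2 * l < 3 * k + 2 ∧
      ∃ a : Fin l → (Fin (m + 1) → ZMod 2),
        A = (∑ j, Matrix.vecMulVec (a j) (a j)) ∧
        (∀ j, a j 0 = 1) ∧
        (∀ j, D1vec (a j) ∈ LinearMap.range (D1mat A).mulVecLin) ∧
        (∀ i : Fin s, InSuperposition (c i) (c1 i) (c2 i) fun j => D1vec (a j)) := by
  classical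
  open Matrix in
  obtain ⟨hsym, h00, hpq3⟩ := hpq
  have hdg : ∀ i : Fin m, A i.succ 0 = A i.succ i.succ :=
    fun i => (hpq3 i).1.symm.trans (hpq3 i).2
  set a0 : Fin (m+1) → ZMod 2 := fun kk => A kk 0 with ha0
  have ha00 : a0 0 = 1 := h00
  have ha0mem : a0 ∈ LinearMap.range A.mulVecLin := PQAux.col_mem A 0
  set A' : Matrix (Fin (m+1)) (Fin (m+1)) (ZMod 2) := A + Matrix.vecMulVec a0 a0 with hA'
  have hA'app : ∀ i j, A' i j = A i j + a0 i * a0 j := fun i j => by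
    simp [hA', Matrix.add_apply, Matrix.vecMulVec_apply]
  have hA'sym : A'.IsSymm := by
    apply Matrix.IsSymm.ext
    intro i j
    rw [hA'app, hA'app, hsym.apply i j]
    ring
  have hfin1 : ∀ x : ZMod 2, x + 1 * x = 0 := by decide
  have hrow0 : ∀ kk, A' 0 kk = 0 := by
    intro kk
    rw [hA'app]
    simp only [ha0]
    rw [h00, hsym.apply 0 kk]
    exact hfin1 _
  have hdiag' : ∀ kk, A' kk kk = 0 := by
    intro kk
    rw [hA'app]
    simp only [ha0]
    rw [PQAux.zsq]
    refine Fin.cases ?_ (fun i => ?_) kk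
    · rw [h00]; decide
    · rw [show A i.succ 0 = A i.succ i.succ from hdg i]
      exact PQAux.zadd _
  -- column space of A' inside column space of A
  have hle : LinearMap.range A'.mulVecLin ≤ LinearMap.range A.mulVecLin := by
    rintro x ⟨y, rfl⟩
    have hxy : A'.mulVecLin y = A.mulVec y + (a0 ⬝ᵥ y) • a0 := by
      simp [hA', Matrix.mulVecLin_apply, Matrix.add_mulVec, PQAux.vmv_mulVec]
    rw [hxy]
    exact add_mem ⟨y, rfl⟩ (Submodule.smul_mem _ _ ha0mem)
  -- rank of A' drops
  set K0 : Submodule (ZMod 2) (Fin (m+1) → ZMod 2) :=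
    LinearMap.ker (LinearMap.proj 0 :
      (Fin (m+1) → ZMod 2) →ₗ[ZMod 2] ZMod 2) with hK0
  set V : Submodule (ZMod 2) (Fin (m+1) → ZMod 2) := LinearMap.range A.mulVecLin with hV
  have hd1 : Module.finrank (ZMod 2) (V ⊓ K0 : Submodule (ZMod 2) (Fin (m+1) → ZMod 2)) + 1 ≤
      Module.finrank (ZMod 2) V :=
    PQAux.drop V (V ⊓ K0) 0 a0 ha0mem ha00 inf_le_left (fun w hw => hw.2)
  have hsub : LinearMap.range A'.mulVecLin ≤ V ⊓ K0 := by
    intro x hx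
    exact ⟨hle hx, PQAux.mem_row_zero hrow0 hx⟩
  have hrankA' : A'.rank + 1 ≤ k := by
    have hmono := Submodule.finrank_mono hsub
    have e1 : A.rank = Module.finrank (ZMod 2) V := rfl
    have e2 : A'.rank = Module.finrank (ZMod 2) (LinearMap.range A'.mulVecLin) := rfl
    omega
  obtain ⟨h, u, v, hcount, hdec, humem, hvmem⟩ :=
    PQAux.alt_decomp (k - 1) A' hA'sym hdiag' (by omega)
  have hk1 : 1 ≤ k := by omega
  -- basic facts about the vectors
  have hu0 : ∀ p, u p 0 = 0 := fun p => PQAux.mem_row_zero hrow0 (humem p)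
  have hv0 : ∀ p, v p 0 = 0 := fun p => PQAux.mem_row_zero hrow0 (hvmem p)
  have humemA : ∀ p, u p ∈ LinearMap.range A.mulVecLin := fun p => hle (humem p)
  have hvmemA : ∀ p, v p ∈ LinearMap.range A.mulVecLin := fun p => hle (hvmem p)
  -- the triple of vectors attached to each hyperbolic pair
  set T : Fin h → Fin 3 → (Fin (m+1) → ZMod 2) :=
    fun p => ![a0 + u p, a0 + v p, a0 + u p + v p] with hT
  have hP : ∀ p t, T p t 0 = 1 ∧ T p t ∈ LinearMap.range A.mulVecLin := by
    intro p t
    have c0 : (a0 + u p) 0 = 1 := by rw [Pi.add_apply, ha00, hu0]; ring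
    have c1' : (a0 + v p) 0 = 1 := by rw [Pi.add_apply, ha00, hv0]; ring
    have c2' : (a0 + u p + v p) 0 = 1 := by
      rw [Pi.add_apply, Pi.add_apply, ha00, hu0, hv0]; ring
    have m0 : a0 + u p ∈ LinearMap.range A.mulVecLin := add_mem ha0mem (humemA p)
    have m1 : a0 + v p ∈ LinearMap.range A.mulVecLin := add_mem ha0mem (hvmemA p)
    have m2 : a0 + u p + v p ∈ LinearMap.range A.mulVecLin :=
      add_mem (add_mem ha0mem (humemA p)) (hvmemA p)
    refine Fin.cases ?_ (fun t1 => Fin.cases ?_ (fun t2 => Fin.cases ?_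
      (fun t3 => t3.elim0) t2) t1) t
    · simpa only [hT, Matrix.cons_val_zero] using ⟨c0, m0⟩
    · simpa only [hT, Matrix.cons_val_succ, Matrix.cons_val_zero] using ⟨c1', m1⟩
    · simpa only [hT, Matrix.cons_val_succ, Matrix.cons_val_zero] using ⟨c2', m2⟩
  have htrip : ∀ p, Matrix.vecMulVec (T p 0) (T p 0) + Matrix.vecMulVec (T p 1) (T p 1)
      + Matrix.vecMulVec (T p 2) (T p 2)
      = Matrix.vecMulVec a0 a0 +
        (Matrix.vecMulVec (u p) (v p) + Matrix.vecMulVec (v p) (u p)) := by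
    intro p
    ext i j
    simp only [hT, Matrix.add_apply, Matrix.vecMulVec_apply, Pi.add_apply,
      Matrix.cons_val_zero, Matrix.cons_val_one, Matrix.head_cons, Matrix.cons_val_two,
      Matrix.tail_cons]
    exact PQAux.sq3 (a0 i) (a0 j) (u p i) (u p j) (v p i) (v p j)
  -- the sum over each triple
  have htripsum : (∑ pt : Fin h × Fin 3, Matrix.vecMulVec (T pt.1 pt.2) (T pt.1 pt.2))
      = h • Matrix.vecMulVec a0 a0 + A' := by
    rw [Fintype.sum_prod_type]
    have : ∀ p : Fin h, (∑ t : Fin 3, Matrix.vecMulVec (T p t) (T p t))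
        = Matrix.vecMulVec a0 a0 +
          (Matrix.vecMulVec (u p) (v p) + Matrix.vecMulVec (v p) (u p)) := by
      intro p
      rw [Fin.sum_univ_three]
      exact htrip p
    rw [Finset.sum_congr rfl fun p _ => this p, Finset.sum_add_distrib,
      Finset.sum_const, Finset.card_univ, Fintype.card_fin, ← hdec]
  have hAeq : A = A' + Matrix.vecMulVec a0 a0 := by
    have h1 : A' + Matrix.vecMulVec a0 a0
        = A + (Matrix.vecMulVec a0 a0 + Matrix.vecMulVec a0 a0) := by
      rw [hA']; abel
    rw [h1, PQAux.madd, add_zero]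
  -- assemble, by parity of h
  rcases Nat.even_or_odd h with he | ho
  · -- h even : use 3h+1 vectors
    obtain ⟨t, ht2⟩ := he
    have hsmul : h • Matrix.vecMulVec a0 a0 = 0 := by
      rw [ht2, add_nsmul]
      exact PQAux.madd _
    set fam : Fin (h * 3 + 1) → (Fin (m+1) → ZMod 2) :=
      Fin.cons a0 (fun q => T (finProdFinEquiv.symm q).1 (finProdFinEquiv.symm q).2) with hfam
    have hfamsum : (∑ j, Matrix.vecMulVec (fam j) (fam j)) = A := by
      rw [Fin.sum_univ_succ]
      simp only [hfam, Fin.cons_succ, Fin.cons_zero]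
      rw [Equiv.sum_comp (finProdFinEquiv.symm)
        (fun pt : Fin h × Fin 3 => Matrix.vecMulVec (T pt.1 pt.2) (T pt.1 pt.2))]
      rw [htripsum, hsmul, zero_add, hAeq]
      abel
    have hfamP : ∀ j, fam j 0 = 1 ∧ fam j ∈ LinearMap.range A.mulVecLin := by
      intro j
      refine Fin.cases ?_ (fun q => ?_) j
      · exact ⟨ha00, ha0mem⟩
      · simpa only [hfam, Fin.cons_succ] using hP _ _
    have hodd : Odd (h * 3 + 1) := ⟨3 * t, by omega⟩
    refine ⟨h * 3 + 1, hodd, by omega, fam, hfamsum.symm, fun j => (hfamP j).1,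
      fun j => PQAux.D1_mem A hsym hdg _ (hfamP j).2, fun i => ?_⟩
    exact PQAux.superpos (c i) (c1 i) (c2 i) hodd fam (fun j => (hfamP j).1)
      (by rw [hfamsum]; exact hsat i)
  · -- h odd : use 3h vectors
    obtain ⟨t, ht2⟩ := ho
    have hsmul : h • Matrix.vecMulVec a0 a0 = Matrix.vecMulVec a0 a0 := by
      rw [ht2, add_nsmul, one_nsmul, show 2 * t = t + t by ring, add_nsmul]
      rw [PQAux.madd, zero_add]
    set fam : Fin (h * 3) → (Fin (m+1) → ZMod 2) :=
      fun q => T (finProdFinEquiv.symm q).1 (finProdFinEquiv.symm q).2 with hfam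
    have hfamsum : (∑ j, Matrix.vecMulVec (fam j) (fam j)) = A := by
      simp only [hfam]
      rw [Equiv.sum_comp (finProdFinEquiv.symm)
        (fun pt : Fin h × Fin 3 => Matrix.vecMulVec (T pt.1 pt.2) (T pt.1 pt.2))]
      rw [htripsum, hsmul, hAeq]
      abel
    have hfamP : ∀ j, fam j 0 = 1 ∧ fam j ∈ LinearMap.range A.mulVecLin :=
      fun j => hP _ _
    have hodd : Odd (h * 3) := ⟨3 * t + 1, by omega⟩
    refine ⟨h * 3, hodd, by omega, fam, hfamsum.symm, fun j => (hfamP j).1,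
      fun j => PQAux.D1_mem A hsym hdg _ (hfamP j).2, fun i => ?_⟩
    exact PQAux.superpos (c i) (c1 i) (c2 i) hodd fam (fun j => (hfamP j).1)
      (by rw [hfamsum]; exact hsat i)
end

section
/- Let q_1,…,q_k ∈ P(m,3) and let J(q_1,…,q_k) := {Σ_{i=1}^k r_i q_i : r_i ∈ P(m,d−3)}. Let β ∈ P_m be such that wt(β) < 2^{d−3} and there exist some i ∈ [k] and x ∈ supp(β) with q_i(x) ≠ 0. If A : P(m,d) → ℝ is folded over J(q_1,…,q_k), i.e., A is constant on cosets of J(q_1,…,q_k) in P(m,d), then the Fourier coefficient Â_β = 0. -/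
open scoped BigOperators Classical

noncomputable section

/-- `P(m,d)`: the `F₂`-space of functions `F₂^m → F₂` expressible as multivariate
polynomials of total degree at most `d` (the span of multilinear monomials of degree `≤ d`). -/
def polySpace (m d : ℕ) : Submodule (ZMod 2) ((Fin m → ZMod 2) → ZMod 2) :=
  Submodule.span (ZMod 2) {f | ∃ S : Finset (Fin m), S.card ≤ d ∧ f = fun x => ∏ i ∈ S, x i}

/-- `⟨f,g⟩ = ∑_{x ∈ F₂^m} f(x)g(x) ∈ F₂`. -/
def fdot {m : ℕ} (f g : (Fin m → ZMod 2) → ZMod 2) : ZMod 2 :=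
  ∑ x, f x * g x

/-- The Fourier coefficient `Â_β = E_{f ∼ P(m,d)}[A(f) χ_β(f)]`. -/
def rmFourierCoeff {m d : ℕ} (A : polySpace m d → ℝ) (β : (Fin m → ZMod 2) → ZMod 2) : ℝ :=
  (Fintype.card (polySpace m d) : ℝ)⁻¹ *
    ∑ f : polySpace m d, A f * (-1 : ℝ) ^ (fdot β (f : (Fin m → ZMod 2) → ZMod 2)).val

/-- `J(q₁,…,q_k) = {∑ᵢ rᵢ qᵢ : rᵢ ∈ P(m,d−3)}`. -/
def Jset {m : ℕ} (d k : ℕ) (q : Fin k → (Fin m → ZMod 2) → ZMod 2) :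
    Set ((Fin m → ZMod 2) → ZMod 2) :=
  {g | ∃ r : Fin k → (Fin m → ZMod 2) → ZMod 2,
    (∀ i, r i ∈ polySpace m (d - 3)) ∧ g = ∑ i, r i * q i}

/-!
Pick `i` and `x` with `β x = 1` and `qᵢ x = 1`, and put `w = β · qᵢ`, a nonzero function of
weight `< 2^(d-3)`. The dual of the Reed–Muller code `P(m,e)` has minimum distance `2^(e+1)`, so
some `r ∈ P(m,d-3)` has `⟨r, w⟩ = 1`. Then `g = r · qᵢ` lies in `J ∩ P(m,d)` and
`⟨β, g⟩ = ⟨r, w⟩ = 1`: translating by `g` leaves `A` unchanged and flips the sign of `χ_β`, so the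
Fourier sum equals its own negative.
-/

lemma zmod_two_eq_zero_or_one : ∀ a : ZMod 2, a = 0 ∨ a = 1 := by decide

lemma neg_one_pow_val_add_one {R : Type*} [Monoid R] [HasDistribNeg R] (a : ZMod 2) :
    (-1 : R) ^ (a + 1).val = -(-1 : R) ^ a.val := by
  rcases zmod_two_eq_zero_or_one a with rfl | rfl
  all_goals simp [show (1 : ZMod 2).val = 1 from rfl, show (1 + 1 : ZMod 2) = 0 from rfl]

theorem Function.Periodic.mul_antiperiodic {α β : Type*} [Add α] [Mul β] [HasDistribNeg β]
    {f g : α → β} {c : α} (hf : Function.Periodic f c) (hg : Function.Antiperiodic g c) :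
    Function.Antiperiodic (f * g) c := fun x => by simp [hf x, hg x]

theorem Function.Antiperiodic.sum_eq_zero {G M : Type*} [AddGroup G] [Fintype G]
    [AddCommGroup M] [IsAddTorsionFree M] {f : G → M} {c : G} (hf : Function.Antiperiodic f c) :
    ∑ x, f x = 0 :=
  self_eq_neg.mp <| calc
    ∑ x, f x = ∑ x, f (x + c) := (Equiv.sum_comp (Equiv.addRight c) f).symm
    _ = -∑ x, f x := by simp only [hf _, Finset.sum_neg_distrib]

section Weight

variable {α : Type*} [Fintype α]

def wt (w : α → ZMod 2) : ℕ := (Finset.univ.filter fun x => w x = 1).card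

lemma sum_eq_wt (w : α → ZMod 2) : ∑ x, w x = wt w := by
  have h : ∀ x, w x = if w x = 1 then 1 else 0 := fun x => by
    rcases zmod_two_eq_zero_or_one (w x) with h | h <;> simp [h]
  rw [Finset.sum_congr rfl fun x _ => h x, Finset.sum_boole, wt]

lemma wt_mul_le (w v : α → ZMod 2) : wt (w * v) ≤ wt w := by
  refine Finset.card_le_card fun x => ?_
  simp only [Finset.mem_filter, Finset.mem_univ, true_and, Pi.mul_apply]
  rcases zmod_two_eq_zero_or_one (w x) with h | h <;> simp [h]

end Weight

lemma prod_mul_prod_eq_prod_union {ι : Type*} [DecidableEq ι] (S T : Finset ι) (x : ι → ZMod 2) :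
    (∏ i ∈ S, x i) * ∏ i ∈ T, x i = ∏ i ∈ S ∪ T, x i := by
  have idem : ∀ a : ZMod 2, a * a = a := by decide
  rw [← Finset.prod_union_inter, ← Finset.prod_sdiff Finset.inter_subset_union, mul_assoc, idem]

section

variable {m : ℕ}

lemma polySpace_mul_le (a b : ℕ) : polySpace m a * polySpace m b ≤ polySpace m (a + b) := by
  rw [polySpace, polySpace, Submodule.span_mul_span]
  refine Submodule.span_le.mpr ?_
  rintro _ ⟨_, ⟨S, hS, rfl⟩, _, ⟨T, hT, rfl⟩, rfl⟩
  exact Submodule.subset_span ⟨S ∪ T, (S.card_union_le T).trans (add_le_add hS hT),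
    funext fun x => prod_mul_prod_eq_prod_union S T x⟩

lemma one_mem_polySpace (e : ℕ) : (1 : (Fin m → ZMod 2) → ZMod 2) ∈ polySpace m e :=
  Submodule.subset_span ⟨∅, by simp, by funext; simp⟩

lemma coord_mem_polySpace (i : Fin m) : (fun x : Fin m → ZMod 2 => x i) ∈ polySpace m 1 :=
  Submodule.subset_span ⟨{i}, by simp, by simp⟩

def coordIndicator (i : Fin m) (c : ZMod 2) : (Fin m → ZMod 2) → ZMod 2 :=
  fun x => if x i = c then 1 else 0

lemma coordIndicator_mem_polySpace (i : Fin m) (c : ZMod 2) :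
    coordIndicator i c ∈ polySpace m 1 := by
  have h : coordIndicator i c = (fun x => x i) + (c + 1) • 1 := by
    funext x
    simp only [coordIndicator, Pi.add_apply, Pi.smul_apply, Pi.one_apply, smul_eq_mul, mul_one]
    generalize x i = a
    revert a c
    decide
  rw [h]
  exact add_mem (coord_mem_polySpace i) (Submodule.smul_mem _ _ (one_mem_polySpace 1))

lemma coordIndicator_mul_eq_one_iff {i : Fin m} {c : ZMod 2} {w : (Fin m → ZMod 2) → ZMod 2}
    {x : Fin m → ZMod 2} : (coordIndicator i c * w) x = 1 ↔ w x = 1 ∧ x i = c := by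
  by_cases h : x i = c <;> simp [coordIndicator, h]

lemma wt_coordIndicator_mul_add (i : Fin m) {c c' : ZMod 2} (hc : c ≠ c')
    (w : (Fin m → ZMod 2) → ZMod 2) :
    wt (coordIndicator i c * w) + wt (coordIndicator i c' * w) = wt w := by
  have hc' : ∀ x : Fin m → ZMod 2, x i = c' ↔ ¬x i = c := fun x => by
    revert hc; generalize x i = a; revert a c c'; decide
  simp only [wt, coordIndicator_mul_eq_one_iff, hc', ← Finset.filter_filter]
  exact Finset.card_filter_add_card_filter_not _

lemma exists_coordIndicator_mul_wt_pos_le_half {w : (Fin m → ZMod 2) → ZMod 2} (hw : 1 < wt w) :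
    ∃ i c, 0 < wt (coordIndicator i c * w) ∧ 2 * wt (coordIndicator i c * w) ≤ wt w := by
  obtain ⟨a, ha, b, hb, hab⟩ := Finset.one_lt_card.mp hw
  obtain ⟨i, hi⟩ := Function.ne_iff.mp hab
  have hsplit := wt_coordIndicator_mul_add i hi w
  have hpos : ∀ y ∈ Finset.univ.filter fun x => w x = 1, 0 < wt (coordIndicator i (y i) * w) :=
    fun y hy => Finset.card_pos.mpr ⟨y, Finset.mem_filter.mpr
      ⟨Finset.mem_univ _, coordIndicator_mul_eq_one_iff.mpr ⟨(Finset.mem_filter.mp hy).2, rfl⟩⟩⟩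
  rcases le_total (wt (coordIndicator i (a i) * w)) (wt (coordIndicator i (b i) * w)) with h | h
  · exact ⟨i, a i, hpos a ha, by omega⟩
  · exact ⟨i, b i, hpos b hb, by omega⟩

lemma fdot_add_right (f g h : (Fin m → ZMod 2) → ZMod 2) :
    fdot f (g + h) = fdot f g + fdot f h := by
  simp only [fdot, Pi.add_apply, mul_add, Finset.sum_add_distrib]

lemma fdot_one_left_of_odd {w : (Fin m → ZMod 2) → ZMod 2} (hw : Odd (wt w)) : fdot 1 w = 1 := by
  simp only [fdot, Pi.one_apply, one_mul]
  rw [sum_eq_wt, hw.natCast_zmod_two]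

/- An odd-weight `w` pairs to `1` with the constant `1`. Otherwise two points of the support
differ in some coordinate `xᵢ`; the lighter of the two halves `{xᵢ = c}` of the support has at most
half the weight, and multiplying by the indicator of `{xᵢ = c}` costs one degree. -/
theorem exists_mem_polySpace_fdot_eq_one (e : ℕ) {w : (Fin m → ZMod 2) → ZMod 2}
    (hpos : 0 < wt w) (hlt : wt w < 2 ^ (e + 1)) : ∃ r ∈ polySpace m e, fdot r w = 1 := by
  rcases Nat.even_or_odd (wt w) with ⟨t, ht⟩ | hodd
  · match e with
    | 0 => omega
    | e + 1 =>
      obtain ⟨i, c, hpos', hle⟩ := exists_coordIndicator_mul_wt_pos_le_half (w := w) (by omega)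
      obtain ⟨r, hr, hrw⟩ :=
        exists_mem_polySpace_fdot_eq_one e hpos' (by rw [pow_succ] at hlt; omega)
      refine ⟨r * coordIndicator i c,
        polySpace_mul_le e 1 (Submodule.mul_mem_mul hr (coordIndicator_mem_polySpace i c)), ?_⟩
      rw [← hrw]
      simp only [fdot, Pi.mul_apply, mul_assoc]
  · exact ⟨1, one_mem_polySpace e, fdot_one_left_of_odd hodd⟩

lemma mul_mem_Jset {d k : ℕ} (q : Fin k → (Fin m → ZMod 2) → ZMod 2)
    {r : (Fin m → ZMod 2) → ZMod 2} (hr : r ∈ polySpace m (d - 3)) (i : Fin k) :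
    r * q i ∈ Jset d k q := by
  refine ⟨Pi.single i r, fun j => ?_, ?_⟩
  · rcases eq_or_ne j i with rfl | hj
    · simpa using hr
    · simp [hj]
  · simp [Pi.single_apply]

lemma antiperiodic_neg_one_pow_fdot {d : ℕ} (β : (Fin m → ZMod 2) → ZMod 2)
    {g : polySpace m d} (hg : fdot β g = 1) :
    Function.Antiperiodic (fun f : polySpace m d => (-1 : ℝ) ^ (fdot β f).val) g := fun f => by
  simp only [Submodule.coe_add, fdot_add_right, hg, neg_one_pow_val_add_one]

end

/-- a function folded over `J(q₁,…,q_k)` has no Fourier weight on any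
small-support character `β` whose support contains a point violating one of the `qᵢ`. -/
theorem folded_over_J_fourier_vanish (m d k : ℕ)
    (q : Fin k → (Fin m → ZMod 2) → ZMod 2) (hq : ∀ i, q i ∈ polySpace m 3)
    (β : (Fin m → ZMod 2) → ZMod 2)
    (hwt : (Finset.univ.filter fun x => β x = 1).card < 2 ^ (d - 3))
    (hviol : ∃ i : Fin k, ∃ x : Fin m → ZMod 2, β x = 1 ∧ q i x ≠ 0)
    (A : polySpace m d → ℝ)
    (hfold : ∀ f g : polySpace m d,
      ((g : (Fin m → ZMod 2) → ZMod 2) - (f : (Fin m → ZMod 2) → ZMod 2)) ∈ Jset d k q →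
      A g = A f) :
    rmFourierCoeff A β = 0 := by
  obtain ⟨i, x₀, hβx₀, hqx₀⟩ := hviol
  have hw_pos : 0 < wt (β * q i) := Finset.card_pos.mpr
    ⟨x₀, by simp [hβx₀, (zmod_two_eq_zero_or_one _).resolve_left hqx₀]⟩
  have hw_lt : wt (β * q i) < 2 ^ (d - 3) := (wt_mul_le β (q i)).trans_lt hwt
  have hd : 3 ≤ d := by
    by_contra h
    rw [Nat.sub_eq_zero_of_le (by omega), pow_zero] at hw_lt
    omega
  obtain ⟨r, hr, hrw⟩ := exists_mem_polySpace_fdot_eq_one (d - 3) hw_pos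
    (hw_lt.trans (Nat.pow_lt_pow_succ one_lt_two))
  have hrq : r * q i ∈ polySpace m d :=
    Nat.sub_add_cancel hd ▸ polySpace_mul_le _ _ (Submodule.mul_mem_mul hr (hq i))
  set g : polySpace m d := ⟨r * q i, hrq⟩
  have hA : Function.Periodic A g := fun f =>
    hfold f (f + g) (by simpa using mul_mem_Jset q hr i)
  have hβg : fdot β g = 1 := by
    rw [← hrw]
    simp only [fdot, g, Pi.mul_apply, mul_left_comm]
  exact mul_eq_zero_of_right _
    (hA.mul_antiperiodic (antiperiodic_neg_one_pow_fdot β hβg)).sum_eq_zero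
end
end

section
/- Let n,m ≥ 1, let δ ∈ [0,1], and let μ be a probability distribution on matrices A ∈ F_2^{n×m} such that for every nonzero z ∈ F_2^m, Pr_{A∼μ}[Az = 0] ≤ δ. Let M ∈ F_2^{m×m} be a symmetric matrix with rank(M) = l over F_2. Then Pr_{A∼μ}[rank(A M Aᵀ) ≠ l] ≤ (2^l − 1)δ. -/
open scoped BigOperators Classical

/-! If `A` kills no nonzero vector of `range M`, it is injective on `range M ⊇ range (M Aᵀ)`, so
`rank (A M Aᵀ) = rank (M Aᵀ) = rank (A M) = rank M`, the middle step by transposing and using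
`Mᵀ = M`. Hence a change of rank forces `A x = 0` for one of the `2^l − 1` nonzero vectors
`x ∈ range M`, and a union bound over these finishes. -/

namespace Matrix

open LinearMap

variable {K : Type*} [Field K] {l m n : Type*} [Fintype m] [Fintype n]

theorem rank_mul_eq_right_of_disjoint {A : Matrix l m K} {B : Matrix m n K}
    (h : Disjoint (range B.mulVecLin) (ker A.mulVecLin)) : (A * B).rank = B.rank := by
  rw [rank, rank, mulVecLin_mul, range_comp, ← range_domRestrict,
    finrank_range_of_inj (injective_domRestrict_iff.mpr h)]

theorem IsSymm.rank_mul_mul_transpose_eq [Fintype l] {A : Matrix l m K} {M : Matrix m m K}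
    (hM : M.IsSymm) (h : Disjoint (range M.mulVecLin) (ker A.mulVecLin)) :
    (A * M * Aᵀ).rank = M.rank := by
  have hMA : range (M * Aᵀ).mulVecLin ≤ range M.mulVecLin := by
    rw [mulVecLin_mul, range_comp]
    exact map_le_range
  rw [Matrix.mul_assoc, rank_mul_eq_right_of_disjoint (h.mono_left hMA), ← rank_transpose,
    transpose_mul, transpose_transpose, hM.eq, rank_mul_eq_right_of_disjoint h]

end Matrix

theorem Finset.sum_ite_le_sum_sum_ite_of_imp {α ι : Type*} [Fintype α] {μ : α → ℝ}
    (hμ : ∀ a, 0 ≤ μ a) {p : α → Prop} [DecidablePred p] {s : Finset ι} {q : ι → α → Prop}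
    [∀ i, DecidablePred (q i)] (hpq : ∀ a, p a → ∃ i ∈ s, q i a) :
    ∑ a, (if p a then μ a else 0) ≤ ∑ i ∈ s, ∑ a, if q i a then μ a else 0 := by
  have hterm : ∀ a i, 0 ≤ if q i a then μ a else 0 := fun a _ => ite_nonneg (hμ a) le_rfl
  rw [Finset.sum_comm]
  refine Finset.sum_le_sum fun a _ => ?_
  split_ifs with ha
  · obtain ⟨i, hi, hqi⟩ := hpq a ha
    calc μ a = if q i a then μ a else 0 := (if_pos hqi).symm
      _ ≤ _ := Finset.single_le_sum (fun j _ => hterm a j) hi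
  · exact Finset.sum_nonneg fun i _ => hterm a i

theorem rank_preservation_general (n m : ℕ) (δ : ℝ)
    (μ : Matrix (Fin n) (Fin m) (ZMod 2) → ℝ)
    (hμ0 : ∀ A, 0 ≤ μ A)
    (hsmooth : ∀ z : Fin m → ZMod 2, z ≠ 0 →
      (∑ A : Matrix (Fin n) (Fin m) (ZMod 2), if A.mulVec z = 0 then μ A else 0) ≤ δ)
    (l : ℕ) (M : Matrix (Fin m) (Fin m) (ZMod 2)) (hsymm : M.IsSymm) (hrank : M.rank = l) :
    (∑ A : Matrix (Fin n) (Fin m) (ZMod 2),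
        if (A * M * A.transpose).rank ≠ l then μ A else 0) ≤
      ((2 : ℝ) ^ l - 1) * δ := by
  set V := LinearMap.range M.mulVecLin
  set T := Finset.univ.erase (0 : V)
  have hbad : ∀ A : Matrix (Fin n) (Fin m) (ZMod 2),
      (A * M * A.transpose).rank ≠ l → ∃ x ∈ T, A.mulVec x = 0 := by
    intro A hA
    by_contra! hinj
    refine hA (hrank ▸ hsymm.rank_mul_mul_transpose_eq (Submodule.disjoint_def.mpr ?_))
    intro x hx hAx
    by_contra hx0
    exact hinj ⟨x, hx⟩ (by simpa [T] using hx0) hAx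
  have hcard : T.card = 2 ^ l - 1 := by
    rw [Finset.card_erase_of_mem (Finset.mem_univ _), Finset.card_univ,
      Module.card_eq_pow_finrank (K := ZMod 2), ZMod.card, ← hrank]
    rfl
  calc _ ≤ ∑ x ∈ T, ∑ A, if A.mulVec x = 0 then μ A else 0 :=
        Finset.sum_ite_le_sum_sum_ite_of_imp hμ0 hbad
    _ ≤ ∑ x ∈ T, δ :=
        Finset.sum_le_sum fun x hx => hsmooth x (by simpa using Finset.ne_of_mem_erase hx)
    _ = _ := by
        rw [Finset.sum_const, hcard, nsmul_eq_mul]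
        push_cast [Nat.one_le_two_pow]
        ring

/-- smoothness-based rank preservation: if `μ` is a probability distribution on
matrices `A ∈ F₂^{n×m}` under which every fixed nonzero vector `z` satisfies
`Pr[Az = 0] ≤ δ`, and `M ∈ F₂^{m×m}` is symmetric of rank `l`, then
`Pr[rank(A M Aᵀ) ≠ l] ≤ (2^l − 1)δ`. -/
theorem rank_preservation (n m : ℕ) (hn : 0 < n) (hm : 0 < m) (δ : ℝ) (hδ0 : 0 ≤ δ) (hδ1 : δ ≤ 1)
    (μ : Matrix (Fin n) (Fin m) (ZMod 2) → ℝ)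
    (hμ0 : ∀ A, 0 ≤ μ A) (hμ1 : ∑ A : Matrix (Fin n) (Fin m) (ZMod 2), μ A = 1)
    (hsmooth : ∀ z : Fin m → ZMod 2, z ≠ 0 →
      (∑ A : Matrix (Fin n) (Fin m) (ZMod 2), if A.mulVec z = 0 then μ A else 0) ≤ δ)
    (l : ℕ) (M : Matrix (Fin m) (Fin m) (ZMod 2)) (hsymm : M.IsSymm) (hrank : M.rank = l) :
    (∑ A : Matrix (Fin n) (Fin m) (ZMod 2),
        if (A * M * A.transpose).rank ≠ l then μ A else 0) ≤
      ((2 : ℝ) ^ l - 1) * δ :=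
  rank_preservation_general n m δ μ hμ0 hsmooth l M hsymm hrank
end
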